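/- arXiv:1808.00891 — 2 statements merged into one kernel-verified Lean document; each statement's English description precedes it below -/
import Mathlib

section
/- For all natural numbers m, n and every complex number a such that a, a+1, ..., a+m+n-1 are all nonzero, one has ∑_{k=0}^{min(m,n)} ((-m)_k (-n)_k)/((a)_k k!) = (a)_{m+n} / ((a)_m (a)_n), where (x)_k is the Pochhammer symbol. -/
/-!
Write `(x)_k` for the rising factorial. For `k ≤ n` one has `(a)_n = (a)_k (a + k)_{n-k}`,
`(-m)_k = (-1)^k m(m-1)⋯(m-k+1)` and `(-n)_k / k! = (-1)^k C(n, k)`, so after multiplication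
by `(a)_n` the sum becomes `∑ₖ C(n, k) m(m-1)⋯(m-k+1) (a + k)_{n-k}`, which is the
Chu–Vandermonde expansion of `(a + m)_n`. Finally `(a)_{m+n} = (a)_m (a + m)_n`.
-/

open Finset

noncomputable def poch (a : ℂ) (k : ℕ) : ℂ := ∏ j ∈ Finset.range k, (a + j)

open Polynomial
open scoped Nat

lemma poch_eq_eval_ascPochhammer (a : ℂ) (k : ℕ) : poch a k = (ascPochhammer ℂ k).eval a := by
  induction k with
  | zero => simp [poch]
  | succ k ih => rw [poch, prod_range_succ, ← poch, ih, ascPochhammer_succ_eval]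

section CommRing

variable {R : Type*} [CommRing R]

theorem ascPochhammer_add_eval (a : R) (k j : ℕ) :
    (ascPochhammer R (k + j)).eval a =
      (ascPochhammer R k).eval a * (ascPochhammer R j).eval (a + k) := by
  rw [← ascPochhammer_mul, eval_mul, eval_comp]
  simp

theorem ascPochhammer_eval_add_natCast (a : R) (m n : ℕ) :
    (ascPochhammer R n).eval (a + m) =
      ∑ k ∈ range (n + 1),
        n.choose k * m.descFactorial k * (ascPochhammer R (n - k)).eval (a + k) := by
  -- Chu–Vandermonde for falling factorials at `m + (a + n - 1)`, read back as rising factorials.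
  have h := Ring.descPochhammer_smeval_add n (Commute.all (m : R) (a + n - 1))
  rw [Nat.sum_antidiagonal_eq_sum_range_succ_mk, descPochhammer_smeval_eq_ascPochhammer,
    ascPochhammer_smeval_eq_eval] at h
  convert h using 1
  · congr 1
    ring
  refine sum_congr rfl fun k hk => ?_
  have hkn : k ≤ n := Nat.lt_succ_iff.mp (mem_range.mp hk)
  rw [descPochhammer_smeval_eq_descFactorial, descPochhammer_smeval_eq_ascPochhammer,
    ascPochhammer_smeval_eq_eval, Nat.cast_sub hkn, mul_assoc,
    show a + n - 1 - (n - k : R) + 1 = a + k by ring]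

end CommRing

section Field

variable {K : Type*} [Field K]

theorem ascPochhammer_eval_ne_zero {a : K} {n : ℕ} (ha : ∀ j < n, a + j ≠ 0) :
    (ascPochhammer K n).eval a ≠ 0 := by
  rw [ne_eq, ascPochhammer_eval_eq_zero_iff]
  rintro ⟨j, hj, hja⟩
  exact ha j hj (by rw [hja, add_neg_cancel])

theorem sum_ascPochhammer_neg_natCast_div [CharZero K] (a : K) (m n : ℕ)
    (ha : (ascPochhammer K n).eval a ≠ 0) :
    ∑ k ∈ range (n + 1),
        (ascPochhammer K k).eval (-(m : K)) * (ascPochhammer K k).eval (-(n : K)) /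
          ((ascPochhammer K k).eval a * k !) =
      (ascPochhammer K n).eval (a + m) / (ascPochhammer K n).eval a := by
  rw [ascPochhammer_eval_add_natCast, sum_div]
  refine sum_congr rfl fun k hk => ?_
  obtain ⟨j, rfl⟩ := Nat.exists_eq_add_of_le (Nat.lt_succ_iff.mp (mem_range.mp hk))
  rw [ascPochhammer_add_eval] at ha ⊢
  rw [Nat.add_sub_cancel_left]
  have hsign : (-1 : K) ^ k * (-1) ^ k = 1 := by rw [← mul_pow]; simp
  have hk : (k ! : K) ≠ 0 := by exact_mod_cast k.factorial_ne_zero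
  rw [ascPochhammer_eval_neg_eq_descPochhammer, ascPochhammer_eval_neg_eq_descPochhammer,
    descPochhammer_eval_eq_descFactorial, descPochhammer_eval_eq_descFactorial,
    Nat.descFactorial_eq_factorial_mul_choose (k + j), mul_mul_mul_comm, hsign, one_mul]
  field_simp [left_ne_zero_of_mul ha, right_ne_zero_of_mul ha]
  push_cast
  ring

end Field

/-- Eigenvalue of the Burchnall–Chaundy operator `∇(a)` on `x^m y^n`:
`∑_{k=0}^{min(m,n)} ((-m)_k (-n)_k)/((a)_k k!) = (a)_{m+n}/((a)_m (a)_n)`. -/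
theorem nabla_eigenvalue (m n : ℕ) (a : ℂ) (ha : ∀ j : ℕ, j < m + n → a + j ≠ 0) :
    ∑ k ∈ Finset.range (min m n + 1),
        poch (-(m : ℂ)) k * poch (-(n : ℂ)) k / (poch a k * (k.factorial : ℂ)) =
      poch a (m + n) / (poch a m * poch a n) := by
  simp only [poch_eq_eval_ascPochhammer]
  have hm : (ascPochhammer ℂ m).eval a ≠ 0 :=
    ascPochhammer_eval_ne_zero fun j hj => ha j (by omega)
  have hn : (ascPochhammer ℂ n).eval a ≠ 0 :=
    ascPochhammer_eval_ne_zero fun j hj => ha j (by omega)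
  rw [ascPochhammer_add_eval, mul_div_mul_left _ _ hm,
    ← sum_ascPochhammer_neg_natCast_div a m n hn]
  refine sum_subset (by simp) fun k hk hkm => ?_
  simp only [mem_range] at hk hkm
  rw [ascPochhammer_eval_neg_coe_nat_of_lt (by omega), zero_mul, zero_div]
end

section
/- Let a, d be complex numbers such that a is not an integer and d is not a nonpositive integer, and extend the Pochhammer symbol to negative integer indices by (a)_{-j} = 1/(a-j)_j. Then for all natural numbers m, n: (a)_{m-n}/((d)_m · m! · n!) = ((a)_m/((d)_m m!)) · ((-1)^n/((1-a)_n n!)) + ∑_{k=1}^{m} ∑_{l=1}^{min(k,n)} (-1)^{k+l} · ((k-1)!/((l-1)! l! (k-l)!)) · (1/((1-a)_l (d)_k)) · ((a+k)_{m-k}/((d+k)_{m-k} (m-k)!)) · ((-1)^{n-l}/((1-a+l)_{n-l} (n-l)!)). Equivalently, the double power series Η₅(a;d;x,y) = ∑_{m,n≥0} ((a)_{m-n}/((d)_m m! n!)) x^m y^n equals ₁F₁(a;d;x)·₀F₁(1-a;-y) + ∑_{k≥1}∑_{l=1}^{k} ((-1)^{k+l}(k-1)!/((l-1)! l! (k-l)!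 (1-a)_l (d)_k)) x^k y^l ₁F₁(a+k;d+k;x)·₀F₁(1-a+l;-y) as formal power series in x, y. -/
/-!
Since `(a)_{m-n} = (a-n)_m / (a-n)_n` and `(a-n)_n = (-1)^n (1-a)_n`, the left-hand side is
`(-1)^n (a-n)_m / ((d)_m (1-a)_n m! n!)`. The convolution
`(a-n)_m = ∑_k (-1)^k C(m,k) (n)_k (a+k)_{m-k}` splits it into `m + 1` terms: the term `k = 0` is the
product term, and for `k ≥ 1` the Chu–Vandermonde identity `(n)_k = k! ∑_l C(n,l) C(k-1,l-1)`
spreads the `k`-th term over the inner sum in `l`.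
-/

open Finset

/-- Generalized Pochhammer symbol for integer index:
`(a)_z` is the usual rising factorial for `z ≥ 0`, and `(a)_{-j} = 1/(a-j)_j`. -/
noncomputable def pochZ (a : ℂ) : ℤ → ℂ
  | Int.ofNat k => poch a k
  | Int.negSucc j => 1 / poch (a - (j + 1 : ℕ)) (j + 1)

theorem poch_zero (a : ℂ) : poch a 0 = 1 := prod_range_zero _

theorem poch_succ (a : ℂ) (k : ℕ) : poch a (k + 1) = poch a k * (a + k) := prod_range_succ _ _

theorem poch_add (a : ℂ) (j k : ℕ) : poch a (j + k) = poch a j * poch (a + j) k := by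
  rw [poch, prod_range_add]
  congr 1
  exact prod_congr rfl fun i _ => by push_cast; ring

theorem poch_succ' (a : ℂ) (k : ℕ) : poch a (k + 1) = a * poch (a + 1) k := by
  rw [add_comm k, poch_add, poch, prod_range_one, Nat.cast_one, Nat.cast_zero, add_zero]

theorem poch_ne_zero {a : ℂ} (h : ∀ i : ℕ, a + i ≠ 0) (k : ℕ) : poch a k ≠ 0 :=
  prod_ne_zero_iff.2 fun i _ => h i

theorem poch_natCast (n k : ℕ) : poch (n : ℂ) k = (n.ascFactorial k : ℕ) := by
  induction k with
  | zero => simp [poch_zero]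
  | succ k ih => rw [poch_succ, ih, Nat.ascFactorial_succ]; push_cast; ring

theorem poch_sub_self (a : ℂ) (n : ℕ) : poch (a - n) n = (-1) ^ n * poch (1 - a) n := by
  have h : ∀ j ∈ range n, a - n + ((n - 1 - j : ℕ) : ℂ) = -1 * (1 - a + j) := fun j hj => by
    have hj : j < n := mem_range.1 hj
    push_cast [Nat.cast_sub (by omega : j ≤ n - 1), Nat.cast_sub (by omega : 1 ≤ n)]
    ring
  rw [poch, poch, ← prod_range_reflect, prod_congr rfl h, prod_mul_distrib, prod_const, card_range]

/-- Vandermonde convolution for rising factorials, with `(-1)^k (ν)_k` the falling factorial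
of `-ν`. -/
theorem poch_sub_eq_sum (a ν : ℂ) (m : ℕ) : poch (a - ν) m =
    ∑ k ∈ range (m + 1), (m.choose k : ℂ) * ((-1) ^ k * poch ν k * poch (a + k) (m - k)) := by
  induction m generalizing a with
  | zero => simp [poch_zero]
  | succ m ih =>
    rw [sum_choose_succ_mul (fun i j => (-1) ^ i * poch ν i * poch (a + i) j), ← sum_add_distrib,
      poch_succ', show a - ν + 1 = a + 1 - ν by ring, ih, mul_sum]
    refine sum_congr rfl fun i hi => ?_
    have hi : i ≤ m := Nat.lt_succ_iff.1 (mem_range.1 hi)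
    rw [show m + 1 - i = m - i + 1 by omega, poch_succ', poch_succ]
    push_cast
    ring_nf

theorem pochZ_sub_eq_div (a : ℂ) (m n : ℕ) (h : poch (a - n) n ≠ 0) :
    pochZ a ((m : ℤ) - n) = poch (a - n) m / poch (a - n) n := by
  rw [eq_div_iff h]
  rcases le_or_gt n m with hnm | hmn
  · obtain ⟨j, rfl⟩ := Nat.exists_eq_add_of_le hnm
    rw [show ((n + j : ℕ) : ℤ) - n = j by omega, poch_add, sub_add_cancel]
    exact mul_comm _ _
  · obtain ⟨j, rfl⟩ := Nat.exists_eq_add_of_lt hmn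
    have hsplit : poch (a - ↑(m + j + 1)) (m + j + 1) =
        poch (a - ↑(m + j + 1)) m * poch (a - ↑(j + 1)) (j + 1) := by
      rw [add_assoc, poch_add]
      congr 2
      push_cast
      ring
    rw [show (m : ℤ) - ↑(m + j + 1) = Int.negSucc j by omega, pochZ, hsplit]
    rw [hsplit] at h
    rw [one_div, inv_mul_eq_iff_eq_mul₀ (right_ne_zero_of_mul h), mul_comm]

theorem Nat.sum_choose_mul_choose_pred (n k : ℕ) (hk : 1 ≤ k) :
    ∑ l ∈ Icc 1 (min k n), n.choose l * (k - 1).choose (l - 1) = (n + (k - 1)).choose k := by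
  rw [Nat.add_choose_eq, Nat.sum_antidiagonal_eq_sum_range_succ_mk]
  apply sum_subset_zero_on_sdiff
  · intro l hl
    simp only [mem_Icc, mem_range] at hl ⊢
    omega
  · intro l hl
    simp only [mem_sdiff, mem_range, mem_Icc] at hl
    rcases Nat.eq_zero_or_pos l with rfl | hl0
    · simp [Nat.choose_eq_zero_of_lt (show k - 1 < k by omega)]
    · simp [Nat.choose_eq_zero_of_lt (show n < l by omega)]
  · intro l hl
    simp only [mem_Icc] at hl
    rw [← Nat.choose_symm (show l - 1 ≤ k - 1 by omega), show k - 1 - (l - 1) = k - l by omega]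

section

open Nat

theorem poch_natCast_eq_factorial_mul_sum (n k : ℕ) (hk : 1 ≤ k) :
    poch (n : ℂ) k = k ! * ∑ l ∈ Icc 1 (min k n), (n.choose l * (k - 1).choose (l - 1) : ℂ) := by
  rw [poch_natCast, ascFactorial_eq_factorial_mul_choose', show n + k - 1 = n + (k - 1) by omega,
    ← Nat.sum_choose_mul_choose_pred n k hk]
  push_cast
  rfl

theorem H5_summand_eq (a d : ℂ) {m n k l : ℕ} (hkm : k ≤ m) (hl : l ∈ Icc 1 (min k n))
    (hd : poch d m ≠ 0) (ha : poch (1 - a) n ≠ 0) :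
    (-1 : ℂ) ^ (k + l) * (((k - 1)! : ℂ) / (((l - 1)! : ℂ) * (l ! : ℂ) * ((k - l)! : ℂ))) *
        (1 / (poch (1 - a) l * poch d k)) *
        (poch (a + k) (m - k) / (poch (d + k) (m - k) * ((m - k)! : ℂ))) *
        ((-1 : ℂ) ^ (n - l) / (poch (1 - a + l) (n - l) * ((n - l)! : ℂ))) =
      (n.choose l * (k - 1).choose (l - 1) : ℂ) * k ! *
        ((-1) ^ (k + n) * m.choose k * poch (a + k) (m - k) /
          (poch d m * poch (1 - a) n * m ! * n !)) := by
  obtain ⟨hl1, hl_min⟩ := mem_Icc.1 hl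
  have hlk : l ≤ k := hl_min.trans (min_le_left k n)
  have hln : l ≤ n := hl_min.trans (min_le_right k n)
  have hd_split : poch d m = poch d k * poch (d + k) (m - k) := by
    rw [← poch_add, Nat.add_sub_cancel' hkm]
  have ha_split : poch (1 - a) n = poch (1 - a) l * poch (1 - a + l) (n - l) := by
    rw [← poch_add, Nat.add_sub_cancel' hln]
  have hm_fac : (m ! : ℂ) = m.choose k * k ! * (m - k)! := by
    exact_mod_cast (choose_mul_factorial_mul_factorial hkm).symm
  have hn_fac : (n ! : ℂ) = n.choose l * l ! * (n - l)! := by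
    exact_mod_cast (choose_mul_factorial_mul_factorial hln).symm
  have hk_fac : ((k - 1)! : ℂ) = (k - 1).choose (l - 1) * (l - 1)! * (k - l)! := by
    rw [← show k - 1 - (l - 1) = k - l by omega]
    exact_mod_cast (choose_mul_factorial_mul_factorial (show l - 1 ≤ k - 1 by omega)).symm
  have hsign : (-1 : ℂ) ^ (k + n) = (-1) ^ (k + l) * (-1) ^ (n - l) := by
    rw [← pow_add, show k + l + (n - l) = k + n by omega]
  have hmk : (m.choose k : ℂ) ≠ 0 := Nat.cast_ne_zero.2 (choose_pos hkm).ne'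
  have hnl : (n.choose l : ℂ) ≠ 0 := Nat.cast_ne_zero.2 (choose_pos hln).ne'
  have hfac (j : ℕ) : (j ! : ℂ) ≠ 0 := Nat.cast_ne_zero.2 j.factorial_ne_zero
  rw [hd_split, mul_ne_zero_iff] at hd
  rw [ha_split, mul_ne_zero_iff] at ha
  rw [hd_split, ha_split, hm_fac, hn_fac, hk_fac, hsign]
  field_simp [hd.1, hd.2, ha.1, ha.2, hfac (l - 1), hfac (k - l), hfac k]

end

/-- Decomposition formula (3.25) for `Η₅(a;d;x,y)`, coefficient of `x^m y^n`. -/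
theorem H5_decomposition (a d : ℂ) (ha : ∀ z : ℤ, a ≠ (z : ℂ))
    (hd : ∀ j : ℕ, d ≠ -(j : ℂ)) (m n : ℕ) :
    pochZ a ((m : ℤ) - n) / (poch d m * (m.factorial : ℂ) * (n.factorial : ℂ)) =
      poch a m / (poch d m * (m.factorial : ℂ)) *
          ((-1 : ℂ) ^ n / (poch (1 - a) n * (n.factorial : ℂ))) +
        ∑ k ∈ Finset.Icc 1 m, ∑ l ∈ Finset.Icc 1 (min k n),
          (-1 : ℂ) ^ (k + l) *
            (((k - 1).factorial : ℂ) /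
              (((l - 1).factorial : ℂ) * (l.factorial : ℂ) * ((k - l).factorial : ℂ))) *
            (1 / (poch (1 - a) l * poch d k)) *
            (poch (a + k) (m - k) / (poch (d + k) (m - k) * ((m - k).factorial : ℂ))) *
            ((-1 : ℂ) ^ (n - l) / (poch (1 - a + l) (n - l) * ((n - l).factorial : ℂ))) := by
  have hd_ne : poch d m ≠ 0 := poch_ne_zero (fun i h => hd i (by linear_combination h)) m
  have ha_ne : poch (1 - a) n ≠ 0 :=
    poch_ne_zero (fun i h => ha (i + 1) (by push_cast; linear_combination -h)) n
  set c : ℕ → ℂ := fun k => (-1) ^ (k + n) * m.choose k * poch (a + k) (m - k) /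
    (poch d m * poch (1 - a) n * m.factorial * n.factorial) with hc
  have h_first : poch a m / (poch d m * m.factorial) *
      ((-1 : ℂ) ^ n / (poch (1 - a) n * n.factorial)) = poch n 0 * c 0 := by
    simp only [hc, poch_zero, Nat.cast_zero, add_zero, zero_add, Nat.choose_zero_right,
      Nat.sub_zero, Nat.cast_one, mul_one]
    field_simp
  calc pochZ a ((m : ℤ) - n) / (poch d m * m.factorial * n.factorial)
      = poch (a - n) m * ((-1) ^ n / (poch d m * poch (1 - a) n * m.factorial * n.factorial)) := by
        rw [pochZ_sub_eq_div a m n (by rw [poch_sub_self]; exact mul_ne_zero (by simp) ha_ne),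
          poch_sub_self]
        field_simp
        rw [← pow_mul, mul_comm n, pow_mul, neg_one_sq, one_pow, mul_one]
    _ = ∑ k ∈ range (m + 1), poch n k * c k := by
        rw [poch_sub_eq_sum, sum_mul]
        refine sum_congr rfl fun k _ => ?_
        simp only [hc, pow_add]
        ring
    _ = _ := by
        rw [Nat.range_succ_eq_Icc_zero, ← insert_Icc_add_one_left_eq_Icc m.zero_le,
          sum_insert (by simp), ← h_first]
        refine congrArg _ (sum_congr rfl fun k hk => ?_)
        obtain ⟨hk1, hkm⟩ := mem_Icc.1 hk
        rw [sum_congr rfl fun l hl => H5_summand_eq a d hkm hl hd_ne ha_ne,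
          ← sum_mul, ← sum_mul, poch_natCast_eq_factorial_mul_sum n k hk1, mul_comm (k.factorial : ℂ)]
end
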